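/- arXiv:2008.00052 — 7 statements merged into one kernel-verified Lean document; each statement's English description precedes it below -/
import Mathlib

section
/- With ℋ_k defined by the recursion ℋ_0 = 0 and ℋ_k(m) = ζ(m) + ½(ℋ_{k-1}(m₊) + ℋ_{k-1}(m₋)), where ζ(m) = ½⟨Xξ(m),ξ(m)⟩, there exists a constant C > 0 depending only on n (e.g., via the bound |ξ(m)| ≤ 2√n) such that |ℋ_k(m₊) − ℋ_k(m₋)| ≤ C d ‖X‖ for all m ∈ ℬ^d and all k ≥ 0. -/
/-- The shift m|b on histories: drop the first symbol, append b. -/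
def shift {d : ℕ} (m : Fin d → Bool) (b : Bool) : Fin d → Bool :=
  fun i => if h : (i : ℕ) + 1 < d then m ⟨(i : ℕ) + 1, h⟩ else b

/-- m|s : append the symbols of s one at a time to the history m. -/
def appendWord {d : ℕ} : {ℓ : ℕ} → (Fin d → Bool) → (Fin ℓ → Bool) → (Fin d → Bool)
  | 0, m, _ => m
  | _+1, m, s => appendWord (shift m (s 0)) (fun i => s i.succ)

/-- The quadratic form ⟨Xv, v⟩. -/
noncomputable def quadip {n : ℕ} (X : Matrix (Fin n) (Fin n) ℝ) (v : Fin n → ℝ) : ℝ :=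
  ∑ i, X.mulVec v i * v i

/-- ℋ_k(m), defined by ℋ_0 = 0 and
ℋ_k(m) = ½⟨Xξ(m),ξ(m)⟩ + ½(ℋ_{k-1}(m₊) + ℋ_{k-1}(m₋)). -/
noncomputable def H {n d : ℕ} (X : Matrix (Fin n) (Fin n) ℝ)
    (ξ : (Fin d → Bool) → Fin n → ℝ) : ℕ → (Fin d → Bool) → ℝ
  | 0, _ => 0
  | k+1, m => (1/2) * quadip X (ξ m)
      + (1/2) * (H X ξ k (shift m true) + H X ξ k (shift m false))

/-- The Euclidean operator norm of a matrix. -/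
noncomputable def opNorm {n : ℕ} (X : Matrix (Fin n) (Fin n) ℝ) : ℝ :=
  ‖(Matrix.toEuclideanCLM (𝕜 := ℝ) X : EuclideanSpace ℝ (Fin n) →L[ℝ] EuclideanSpace ℝ (Fin n))‖


/-! Each level of the recursion for `H` shifts the history by one symbol, so two histories that
agree from position `t` on are mapped to the same history after `t` levels; from then on the two
recursions coincide. Every earlier level changes the difference by at most `max |⟨Xξ, ξ⟩|`, and
`|ξ i| ≤ 2` gives `|⟨Xξ, ξ⟩| ≤ 4n‖X‖`. The histories `m₊` and `m₋` differ only in their last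
entry, so they agree from position `d` on, which yields the bound `4n‖X‖·d`. -/

lemma quadip_eq_inner {n : ℕ} (X : Matrix (Fin n) (Fin n) ℝ) (v : Fin n → ℝ) :
    quadip X v =
      inner ℝ (Matrix.toEuclideanCLM (𝕜 := ℝ) X (WithLp.toLp 2 v)) (WithLp.toLp 2 v) := by
  rw [Matrix.toEuclideanCLM_toLp, EuclideanSpace.inner_toLp_toLp]
  simp [quadip, dotProduct, mul_comm]

lemma abs_quadip_le {n : ℕ} (X : Matrix (Fin n) (Fin n) ℝ) (v : Fin n → ℝ) :
    |quadip X v| ≤ opNorm X * ∑ i, v i ^ 2 := by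
  set w := WithLp.toLp 2 v
  have hw : ‖w‖ ^ 2 = ∑ i, v i ^ 2 := EuclideanSpace.real_norm_sq_eq w
  calc |quadip X v| ≤ ‖Matrix.toEuclideanCLM (𝕜 := ℝ) X w‖ * ‖w‖ := by
        rw [quadip_eq_inner]; exact abs_real_inner_le_norm _ _
    _ ≤ opNorm X * ‖w‖ * ‖w‖ := by gcongr; exact ContinuousLinearMap.le_opNorm _ _
    _ = opNorm X * ∑ i, v i ^ 2 := by rw [← hw]; ring

lemma abs_quadip_le_of_abs_le {n : ℕ} (X : Matrix (Fin n) (Fin n) ℝ) {v : Fin n → ℝ} {c : ℝ}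
    (hv : ∀ i, |v i| ≤ c) : |quadip X v| ≤ n * c ^ 2 * opNorm X := by
  have hsum : ∑ i, v i ^ 2 ≤ n * c ^ 2 := by
    calc ∑ i, v i ^ 2 ≤ ∑ _i : Fin n, c ^ 2 :=
          Finset.sum_le_sum fun i _ => sq_le_sq' (abs_le.mp (hv i)).1 (abs_le.mp (hv i)).2
      _ = n * c ^ 2 := by simp
  calc |quadip X v| ≤ opNorm X * ∑ i, v i ^ 2 := abs_quadip_le X v
    _ ≤ opNorm X * (n * c ^ 2) := by gcongr; exact norm_nonneg _
    _ = n * c ^ 2 * opNorm X := by ring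

lemma abs_weightedMean_le_one {ι : Type*} [Fintype ι] {p q : ι → ℝ} (hp : ∀ i, 0 ≤ p i)
    (hq : ∀ i, |q i| ≤ 1) : |(∑ j, p j * q j) / ∑ j, p j| ≤ 1 := by
  have hpos : 0 ≤ ∑ j, p j := Finset.sum_nonneg fun j _ => hp j
  rw [abs_div, abs_of_nonneg hpos]
  refine div_le_one_of_le₀ ?_ hpos
  calc |∑ j, p j * q j| ≤ ∑ j, |p j * q j| := Finset.abs_sum_le_sum_abs _ _
    _ ≤ ∑ j, p j := Finset.sum_le_sum fun j _ => by
        rw [abs_mul, abs_of_nonneg (hp j)]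
        exact mul_le_of_le_one_right (hp j) (hq j)

lemma shift_eq_of_eq_from {d t : ℕ} {m m' : Fin d → Bool}
    (h : ∀ i : Fin d, t + 1 ≤ (i : ℕ) → m i = m' i) (b : Bool) :
    ∀ i : Fin d, t ≤ (i : ℕ) → shift m b i = shift m' b i := by
  intro i hi
  unfold shift
  split
  · exact h _ (by simpa using hi)
  · rfl

lemma abs_H_sub_H_le {n d : ℕ} (X : Matrix (Fin n) (Fin n) ℝ) (ξ : (Fin d → Bool) → Fin n → ℝ)
    {B : ℝ} (hB : ∀ m, |quadip X (ξ m)| ≤ B) (k t : ℕ) {m m' : Fin d → Bool}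
    (h : ∀ i : Fin d, t ≤ (i : ℕ) → m i = m' i) : |H X ξ k m - H X ξ k m'| ≤ B * t := by
  have hB0 : 0 ≤ B := (abs_nonneg _).trans (hB m)
  induction k generalizing t m m' with
  | zero => simp [H]; positivity
  | succ k ih =>
    cases t with
    | zero =>
      obtain rfl : m = m' := funext fun i => h i (Nat.zero_le _)
      simp
    | succ t =>
      have ht := ih t (shift_eq_of_eq_from h true)
      have hf := ih t (shift_eq_of_eq_from h false)
      have hq := abs_sub (quadip X (ξ m)) (quadip X (ξ m'))
      simp only [H]
      calc _ = |(quadip X (ξ m) - quadip X (ξ m')) / 2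
              + (H X ξ k (shift m true) - H X ξ k (shift m' true)) / 2
              + (H X ξ k (shift m false) - H X ξ k (shift m' false)) / 2| := by ring_nf
        _ ≤ B * (t + 1 : ℕ) := by
          have := abs_add_three ((quadip X (ξ m) - quadip X (ξ m')) / 2)
            ((H X ξ k (shift m true) - H X ξ k (shift m' true)) / 2)
            ((H X ξ k (shift m false) - H X ξ k (shift m' false)) / 2)
          simp only [abs_div, abs_two] at this
          push_cast
          linarith [hB m, hB m']

/-- with ξ(m) = q(m) − (⟨p,q(m)⟩/⟨p,𝟙⟩)𝟙, there is a constant C > 0 depending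
only on n such that |ℋ_k(m₊) − ℋ_k(m₋)| ≤ C d ‖X‖ for all m ∈ ℬ^d and all k ≥ 0. -/
theorem stmt5 (n : ℕ) :
    ∃ C : ℝ, 0 < C ∧
      ∀ (d : ℕ) (q : (Fin d → Bool) → Fin n → ℝ),
        (∀ m i, q m i ∈ Set.Icc (-1:ℝ) 1) →
      ∀ p : Fin n → ℝ, (∀ i, 0 < p i) →
      ∀ X : Matrix (Fin n) (Fin n) ℝ, X.IsSymm →
      ∀ (k : ℕ) (m : Fin d → Bool),
        |H X (fun m' i => q m' i - (∑ j, p j * q m' j) / (∑ j, p j)) k (shift m true)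
          - H X (fun m' i => q m' i - (∑ j, p j * q m' j) / (∑ j, p j)) k (shift m false)|
            ≤ C * d * opNorm X := by
  refine ⟨4 * n + 1, by positivity, fun d q hq p hp X _ k m => ?_⟩
  have hq' : ∀ m' i, |q m' i| ≤ 1 := fun m' i => abs_le.mpr (hq m' i)
  have hξ : ∀ m' i, |q m' i - (∑ j, p j * q m' j) / ∑ j, p j| ≤ 2 := fun m' i =>
    (abs_sub _ _).trans <| by
      linarith [hq' m' i, abs_weightedMean_le_one (fun j => (hp j).le) (hq' m')]
  have key := abs_H_sub_H_le X _ (fun m' => abs_quadip_le_of_abs_le X (hξ m')) k d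
    (m := shift m true) (m' := shift m false) fun i hi => absurd i.2 (by omega)
  have hX : 0 ≤ opNorm X := norm_nonneg _
  calc _ ≤ n * 2 ^ 2 * opNorm X * d := key
    _ ≤ (4 * n + 1) * d * opNorm X := by nlinarith [(Nat.cast_nonneg d : (0 : ℝ) ≤ d)]
end

section
/- (One-step min-max optimality) Let ε > 0, S : {−1,1} → ℝ, and let h₁, h₂ : [−1,1] → ℝ be continuously differentiable. Suppose h₁(−1) > (ε/2)(S(−1) − S(1)) > h₁(1) and h₁′(f) + ε|h₂′(f)| < 0 for all f ∈ [−1,1]. Then the quantity M := min_{|f|≤1} max_{b=±1} { b h₁(f) + ε(S(b) + h₂(f)) } is attained at some f* ∈ [−1,1] satisfying h₁(f*) = (ε/2)(S(−1) − S(1)), and M = ε h₂(f*) + (ε/2)(S(1) + S(−1)). -/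
/-!
The derivative condition makes the payoff `M₊` nonincreasing and `M₋` nondecreasing on `[-1, 1]`.
Since `M₊ - M₋ = 2 h₁ + ε (S(1) - S(-1))` changes sign on `[-1, 1]`, the intermediate value theorem
gives a point `f*` where `M₊(f*) = M₋(f*)`; to its left `max M₊ M₋ ≥ M₊ ≥ M₊(f*)`, to its right
`max M₊ M₋ ≥ M₋ ≥ M₋(f*)`, so `f*` minimizes the maximum.
-/

theorem isMinOn_max_of_antitoneOn_of_monotoneOn {α β : Type*} [LinearOrder α] [LinearOrder β]
    {u v : α → β} {s : Set α} {a : α} (ha : a ∈ s) (hu : AntitoneOn u s) (hv : MonotoneOn v s)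
    (huv : u a = v a) : IsMinOn (fun x => max (u x) (v x)) s a := by
  intro x hx
  rcases le_total x a with hxa | hax
  · calc max (u a) (v a) = u a := by rw [huv, max_self]
      _ ≤ u x := hu hx ha hxa
      _ ≤ max (u x) (v x) := le_max_left _ _
  · calc max (u a) (v a) = v a := by rw [huv, max_self]
      _ ≤ v x := hv ha hx hax
      _ ≤ max (u x) (v x) := le_max_right _ _

section Monotonicity

variable {D : Set ℝ} {f f' : ℝ → ℝ}

theorem Convex.antitoneOn_of_hasDerivWithinAt_nonpos (hD : Convex ℝ D)
    (hf : ∀ x ∈ D, HasDerivWithinAt f (f' x) D x) (hf' : ∀ x ∈ D, f' x ≤ 0) :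
    AntitoneOn f D :=
  _root_.antitoneOn_of_hasDerivWithinAt_nonpos hD (fun x hx => (hf x hx).continuousWithinAt)
    (fun x hx => (hf x (interior_subset hx)).mono interior_subset)
    (fun x hx => hf' x (interior_subset hx))

theorem Convex.monotoneOn_of_hasDerivWithinAt_nonneg (hD : Convex ℝ D)
    (hf : ∀ x ∈ D, HasDerivWithinAt f (f' x) D x) (hf' : ∀ x ∈ D, 0 ≤ f' x) :
    MonotoneOn f D :=
  _root_.monotoneOn_of_hasDerivWithinAt_nonneg hD (fun x hx => (hf x hx).continuousWithinAt)
    (fun x hx => (hf x (interior_subset hx)).mono interior_subset)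
    (fun x hx => hf' x (interior_subset hx))

variable {g k : ℝ → ℝ} {c : ℝ}

theorem antitoneOn_add_mul_const_add (hD : Convex ℝ D) (hg : DifferentiableOn ℝ g D)
    (hk : DifferentiableOn ℝ k D) (hc : 0 ≤ c)
    (hgk : ∀ x ∈ D, derivWithin g D x + c * |derivWithin k D x| ≤ 0) (d : ℝ) :
    AntitoneOn (fun x => g x + c * (d + k x)) D := by
  refine hD.antitoneOn_of_hasDerivWithinAt_nonpos
    (fun x hx => (hg x hx).hasDerivWithinAt.add
      (((hk x hx).hasDerivWithinAt.const_add d).const_mul c))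
    fun x hx => ?_
  have := mul_le_mul_of_nonneg_left (le_abs_self (derivWithin k D x)) hc
  linarith [hgk x hx]

theorem monotoneOn_neg_add_mul_const_add (hD : Convex ℝ D) (hg : DifferentiableOn ℝ g D)
    (hk : DifferentiableOn ℝ k D) (hc : 0 ≤ c)
    (hgk : ∀ x ∈ D, derivWithin g D x + c * |derivWithin k D x| ≤ 0) (d : ℝ) :
    MonotoneOn (fun x => -g x + c * (d + k x)) D := by
  refine hD.monotoneOn_of_hasDerivWithinAt_nonneg
    (fun x hx => (hg x hx).hasDerivWithinAt.neg.add
      (((hk x hx).hasDerivWithinAt.const_add d).const_mul c))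
    fun x hx => ?_
  have := mul_le_mul_of_nonneg_left (neg_abs_le (derivWithin k D x)) hc
  linarith [hgk x hx]

end Monotonicity

/-- one-step min–max optimality, Lemma 3.3: under the strict ordering and
derivative conditions, the min–max `M = min_{|f|≤1} max_{b=±1} {b h₁(f) + ε(S(b) + h₂(f))}`
is attained at some `f* ∈ [-1,1]` equalizing the two payoffs, with
`h₁(f*) = (ε/2)(S(-1) - S(1))` and `M = ε h₂(f*) + (ε/2)(S(1) + S(-1))`. -/
theorem stmt7 (ε : ℝ) (hε : 0 < ε) (S : Bool → ℝ) (h₁ h₂ : ℝ → ℝ)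
    (h₁smooth : ContDiffOn ℝ 1 h₁ (Set.Icc (-1) 1))
    (h₂smooth : ContDiffOn ℝ 1 h₂ (Set.Icc (-1) 1))
    (hord₁ : ε / 2 * (S false - S true) < h₁ (-1))
    (hord₂ : h₁ 1 < ε / 2 * (S false - S true))
    (hder : ∀ f ∈ Set.Icc (-1:ℝ) 1,
      derivWithin h₁ (Set.Icc (-1) 1) f + ε * |derivWithin h₂ (Set.Icc (-1) 1) f| < 0) :
    ∃ fstar ∈ Set.Icc (-1:ℝ) 1,
      h₁ fstar = ε / 2 * (S false - S true) ∧
      max (h₁ fstar + ε * (S true + h₂ fstar)) (-h₁ fstar + ε * (S false + h₂ fstar))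
        = (⨅ f : Set.Icc (-1:ℝ) 1,
            max (h₁ f + ε * (S true + h₂ f)) (-h₁ f + ε * (S false + h₂ f))) ∧
      (⨅ f : Set.Icc (-1:ℝ) 1,
          max (h₁ f + ε * (S true + h₂ f)) (-h₁ f + ε * (S false + h₂ f)))
        = ε * h₂ fstar + ε / 2 * (S true + S false) := by
  obtain ⟨fstar, hmem, hval⟩ := intermediate_value_Icc' (by norm_num : (-1:ℝ) ≤ 1)
    h₁smooth.continuousOn ⟨hord₂.le, hord₁.le⟩
  have hdiff₁ := h₁smooth.differentiableOn one_ne_zero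
  have hdiff₂ := h₂smooth.differentiableOn one_ne_zero
  have hder' := fun x hx => (hder x hx).le
  have hbalance : h₁ fstar + ε * (S true + h₂ fstar) = -h₁ fstar + ε * (S false + h₂ fstar) := by
    rw [hval]; ring
  have hmin := isMinOn_max_of_antitoneOn_of_monotoneOn hmem
    (antitoneOn_add_mul_const_add (convex_Icc _ _) hdiff₁ hdiff₂ hε.le hder' (S true))
    (monotoneOn_neg_add_mul_const_add (convex_Icc _ _) hdiff₁ hdiff₂ hε.le hder' (S false))
    hbalance
  have hinf := hmin.iInf_eq hmem
  refine ⟨fstar, hmem, hval, hinf.symm, hinf.trans ?_⟩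
  rw [hbalance, max_self, hval]
  ring
end

section
/- Assume for all m ∈ ℬ^d that q(m) ≠ 𝟙 and q(m) ≠ −𝟙, and define ϑ_q = min over m ∈ ℬ^d of min{ Σᵢ (1 − qᵢ(m)₊), Σᵢ (1 − qᵢ(m)₋) }, where a₊ = max{a,0} and a₋ = −min{a,0}. Then for every p ∈ (0,∞)ⁿ, ⟨p,𝟙⟩ − |⟨p,q(m)⟩| ≥ ϑ_q γ_p for all m ∈ ℬ^d, where γ_p = min_{1≤i≤n} pᵢ. In particular ϑ_q > 0. -/
/-- The constant ϑ_q = min_{m ∈ ℬ^d} min{ Σᵢ (1 − qᵢ(m)₊), Σᵢ (1 − qᵢ(m)₋) }. -/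
noncomputable def vartheta {n d : ℕ} (q : (Fin d → Bool) → Fin n → ℝ) : ℝ :=
  ⨅ m : Fin d → Bool,
    min (∑ i, (1 - max (q m i) 0)) (∑ i, (1 - max (-(q m i)) 0))

lemma vartheta_le {n d : ℕ} (q : (Fin d → Bool) → Fin n → ℝ) (m : Fin d → Bool) :
    vartheta q ≤ min (∑ i, (1 - max (q m i) 0)) (∑ i, (1 - max (-(q m i)) 0)) :=
  ciInf_le (Set.Finite.bddBelow (Set.finite_range _)) m

/-- Proposition 3.4: if no expert vector q(m) equals ±𝟙, then ϑ_q > 0 and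
⟨p,𝟙⟩ − |⟨p,q(m)⟩| ≥ ϑ_q γ_p for every p ∈ (0,∞)ⁿ and m ∈ ℬ^d, where γ_p = minᵢ pᵢ. -/
theorem stmt8 {n d : ℕ} (hn : 2 ≤ n) (q : (Fin d → Bool) → Fin n → ℝ)
    (hq : ∀ m i, q m i ∈ Set.Icc (-1:ℝ) 1)
    (hne₁ : ∀ m, q m ≠ fun _ => 1) (hne₂ : ∀ m, q m ≠ fun _ => -1) :
    0 < vartheta q ∧
    ∀ p : Fin n → ℝ, (∀ i, 0 < p i) → ∀ m : Fin d → Bool,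
      vartheta q * (⨅ i, p i) ≤ (∑ i, p i) - |∑ i, p i * q m i| := by
  have hnpos : 0 < n := by omega
  haveI : NeZero n := ⟨by omega⟩
  -- each term is positive
  have hpos : ∀ m : Fin d → Bool,
      0 < min (∑ i, (1 - max (q m i) 0)) (∑ i, (1 - max (-(q m i)) 0)) := by
    intro m
    refine lt_min ?_ ?_
    · -- positive part
      apply Finset.sum_pos'
      · intro i _
        have h1 := (hq m i).2
        have : max (q m i) 0 ≤ 1 := max_le h1 zero_le_one
        linarith
      · obtain ⟨i, hi⟩ : ∃ i, q m i ≠ 1 := by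
          by_contra h
          push_neg at h
          exact hne₁ m (funext h)
        refine ⟨i, Finset.mem_univ i, ?_⟩
        have h1 := (hq m i).2
        have : max (q m i) 0 < 1 := max_lt (lt_of_le_of_ne h1 hi) zero_lt_one
        linarith
    · apply Finset.sum_pos'
      · intro i _
        have h1 := (hq m i).1
        have : max (-(q m i)) 0 ≤ 1 := max_le (by linarith) zero_le_one
        linarith
      · obtain ⟨i, hi⟩ : ∃ i, q m i ≠ -1 := by
          by_contra h
          push_neg at h
          exact hne₂ m (funext h)
        refine ⟨i, Finset.mem_univ i, ?_⟩
        have h1 := (hq m i).1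
        have : max (-(q m i)) 0 < 1 :=
          max_lt (by rcases lt_of_le_of_ne h1 (Ne.symm hi) with h; linarith) zero_lt_one
        linarith
  have hvpos : 0 < vartheta q := by
    obtain ⟨m₀, hm₀⟩ := Finite.exists_min
      (fun m : Fin d → Bool =>
        min (∑ i, (1 - max (q m i) 0)) (∑ i, (1 - max (-(q m i)) 0)))
    exact lt_of_lt_of_le (hpos m₀) (le_ciInf hm₀)
  refine ⟨hvpos, fun p hp m => ?_⟩
  set γ := ⨅ i, p i with hγdef
  have hγle : ∀ i, γ ≤ p i := fun i => ciInf_le (Set.Finite.bddBelow (Set.finite_range _)) i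
  have hγpos : 0 < γ := by
    obtain ⟨i₀, hi₀⟩ := Finite.exists_min p
    exact lt_of_lt_of_le (hp i₀) (le_ciInf hi₀)
  -- |⟨p,q⟩| ≤ max (∑ p q₊) (∑ p q₋)
  have habs : |∑ i, p i * q m i| ≤
      max (∑ i, p i * max (q m i) 0) (∑ i, p i * max (-(q m i)) 0) := by
    rw [abs_eq_max_neg]
    apply max_le_max
    · exact Finset.sum_le_sum fun i _ =>
        mul_le_mul_of_nonneg_left (le_max_left _ _) (hp i).le
    · rw [← Finset.sum_neg_distrib]
      exact Finset.sum_le_sum fun i _ => by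
        rw [← mul_neg]
        exact mul_le_mul_of_nonneg_left (le_max_left _ _) (hp i).le
  have key : ∀ (r : Fin n → ℝ), (∀ i, r i ∈ Set.Icc (-1:ℝ) 1) →
      vartheta q ≤ ∑ i, (1 - max (r i) 0) →
      vartheta q * γ ≤ (∑ i, p i) - ∑ i, p i * max (r i) 0 := by
    intro r hr hv
    have h1 : vartheta q * γ ≤ (∑ i, (1 - max (r i) 0)) * γ :=
      mul_le_mul_of_nonneg_right hv hγpos.le
    have h2 : (∑ i, (1 - max (r i) 0)) * γ ≤ ∑ i, p i * (1 - max (r i) 0) := by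
      rw [Finset.sum_mul]
      apply Finset.sum_le_sum
      intro i _
      have hnn : 0 ≤ 1 - max (r i) 0 := by
        have := (hr i).2
        have : max (r i) 0 ≤ 1 := max_le this zero_le_one
        linarith
      calc (1 - max (r i) 0) * γ = γ * (1 - max (r i) 0) := mul_comm _ _
        _ ≤ p i * (1 - max (r i) 0) := mul_le_mul_of_nonneg_right (hγle i) hnn
    have h3 : ∑ i, p i * (1 - max (r i) 0) = (∑ i, p i) - ∑ i, p i * max (r i) 0 := by
      rw [← Finset.sum_sub_distrib]
      congr 1; funext i; ring
    linarith
  have hv := vartheta_le q m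
  have hA : vartheta q * γ ≤ (∑ i, p i) - ∑ i, p i * max (q m i) 0 :=
    key (q m) (hq m) (hv.trans (min_le_left _ _))
  have hB : vartheta q * γ ≤ (∑ i, p i) - ∑ i, p i * max (-(q m i)) 0 :=
    key (fun i => -(q m i)) (fun i => by
        show -(q m i) ∈ Set.Icc (-1:ℝ) 1
        exact ⟨by linarith [(hq m i).2], by linarith [(hq m i).1]⟩)
      (hv.trans (min_le_right _ _))
  rcases le_max_iff.mp (le_refl (max (∑ i, p i * max (q m i) 0) (∑ i, p i * max (-(q m i)) 0))) with h | h
  all_goals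
    rcases max_cases (∑ i, p i * max (q m i) 0) (∑ i, p i * max (-(q m i)) 0) with ⟨he, _⟩ | ⟨he, _⟩ <;>
      linarith
end

section
/- For n = 2 and any p ∈ ℝ² with ⟨p,𝟙⟩ > 0, and any m ∈ ℬ^d, one has q(m) − (⟨p,q(m)⟩/⟨p,𝟙⟩)𝟙 = ((q₂(m) − q₁(m))/⟨p,𝟙⟩) p^⊥, where p^⊥ = (−p₂, p₁). Consequently, Σ_{m ∈ ℬ^d} ⟨X (q(m) − (⟨p,q(m)⟩/⟨p,𝟙⟩)𝟙), q(m) − (⟨p,q(m)⟩/⟨p,𝟙⟩)𝟙⟩ = (Σ_{m∈ℬ^d}(q₂(m)−q₁(m))²) · ⟨X p^⊥, p^⊥⟩/⟨p,𝟙⟩² for any symmetric 2×2 matrix X. -/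
lemma quadip_smul {n : ℕ} (X : Matrix (Fin n) (Fin n) ℝ) (c : ℝ) (v : Fin n → ℝ) :
    quadip X (fun i => c * v i) = c^2 * quadip X v := by
  simp only [quadip, Matrix.mulVec, dotProduct, Finset.mul_sum]
  refine Finset.sum_congr rfl fun i _ => ?_
  simp only [Finset.sum_mul, Finset.mul_sum]
  exact Finset.sum_congr rfl fun j _ => by ring

/-- for n = 2 and ⟨p,𝟙⟩ > 0,
q(m) − (⟨p,q(m)⟩/⟨p,𝟙⟩)𝟙 = ((q₂(m)−q₁(m))/⟨p,𝟙⟩) p^⊥ with p^⊥ = (−p₂,p₁); consequently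
Σ_m ⟨Xη_m,η_m⟩ = (Σ_m (q₂(m)−q₁(m))²)·⟨Xp^⊥,p^⊥⟩/⟨p,𝟙⟩² for any symmetric X. -/
theorem stmt9 {d : ℕ} (q : (Fin d → Bool) → Fin 2 → ℝ)
    (hq : ∀ m i, q m i ∈ Set.Icc (-1:ℝ) 1)
    (p : Fin 2 → ℝ) (hp : 0 < ∑ i, p i)
    (X : Matrix (Fin 2) (Fin 2) ℝ) (hX : X.IsSymm) :
    (∀ m : Fin d → Bool,
      (fun i => q m i - (∑ j, p j * q m j) / (∑ j, p j))
        = fun i => ((q m 1 - q m 0) / (∑ j, p j)) * (![-p 1, p 0] i)) ∧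
    (∑ m : Fin d → Bool, quadip X (fun i => q m i - (∑ j, p j * q m j) / (∑ j, p j)))
      = (∑ m : Fin d → Bool, (q m 1 - q m 0)^2) * (quadip X ![-p 1, p 0] / (∑ j, p j)^2) := by
  have hs : (∑ j, p j) ≠ 0 := ne_of_gt hp
  have key : ∀ m : Fin d → Bool,
      (fun i => q m i - (∑ j, p j * q m j) / (∑ j, p j))
        = fun i => ((q m 1 - q m 0) / (∑ j, p j)) * (![-p 1, p 0] i) := by
    intro m
    funext i
    rw [Fin.sum_univ_two] at hs
    fin_cases i <;>
      simp [Fin.sum_univ_two] <;>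
      field_simp <;> ring
  refine ⟨key, ?_⟩
  calc (∑ m : Fin d → Bool, quadip X (fun i => q m i - (∑ j, p j * q m j) / (∑ j, p j)))
      = ∑ m : Fin d → Bool, ((q m 1 - q m 0) / (∑ j, p j))^2 * quadip X ![-p 1, p 0] := by
        refine Finset.sum_congr rfl fun m _ => ?_
        rw [key m, quadip_smul]
    _ = _ := by
        rw [Finset.sum_mul]
        refine Finset.sum_congr rfl fun m _ => ?_
        field_simp
        try ring
end

section
/- Let g : ℝⁿ → ℝ be Lipschitz continuous and θ-increasing, i.e. g(x + s𝟙) ≥ g(x) + θs for all x and s ≥ 0, with θ > 0. Let ḡ(y) = g(R⁻¹y) where R is the linear change of variables yᵢ = xᵢ − xₙ for 1 ≤ i ≤ n−1 and yₙ = x₁+⋯+xₙ. Then there exists a Lipschitz continuous function h⁰ : ℝⁿ → ℝ such that ḡ(y₁,…,y_{n-1}, h⁰(y₁,…,y_{n-1},s)) = s for all y ∈ ℝ^{n-1} and s ∈ ℝ; moreover, where differentiable, √n/Lip(g) ≤ ∂h⁰/∂s ≤ n/θ. -/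
/-!
Since `R (x + c𝟙) = R x + (n+1) c e_last`, moving the last coordinate of `y` by `t` moves `R⁻¹ y`
by `t/(n+1)` along `𝟙`. Hence on every line parallel to the last axis `ḡ` increases at rate at
least `θ/(n+1)` and is `L/√(n+1)`-Lipschitz, so it is a bijection of `ℝ` whose inverse `h⁰` has
slopes between `√(n+1)/L` and `(n+1)/θ`. Changing the other coordinates of `y` moves `ḡ` by a
Lipschitz amount (`R⁻¹` is linear), and the rate `θ/(n+1)` turns this into a Lipschitz bound on `h⁰`.
-/

/-- The change of variables R: yᵢ = xᵢ − xₙ for i < n (0-indexed i < n), yₙ = x₁ + ⋯ + xₙ.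
Here the n of the paper is n+1. -/
noncomputable def Rmap {n : ℕ} (x : Fin (n+1) → ℝ) : Fin (n+1) → ℝ :=
  fun j => if (j : ℕ) < n then x j - x (Fin.last n) else ∑ i, x i

open Filter Set

section Expanding

variable {f : ℝ → ℝ} {a : ℝ}

lemma mul_abs_sub_le_of_expanding (hf : ∀ s t, s ≤ t → f s + a * (t - s) ≤ f t) (s t : ℝ) :
    a * |t - s| ≤ |f t - f s| := by
  rcases le_total s t with hst | hts
  · rw [abs_of_nonneg (sub_nonneg.2 hst)]
    exact (by linarith [hf s t hst] : a * (t - s) ≤ f t - f s).trans (le_abs_self _)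
  · rw [abs_sub_comm, abs_of_nonneg (sub_nonneg.2 hts), abs_sub_comm]
    exact (by linarith [hf t s hts] : a * (s - t) ≤ f s - f t).trans (le_abs_self _)

lemma surjective_of_expanding (ha : 0 < a) (hf : ∀ s t, s ≤ t → f s + a * (t - s) ≤ f t)
    (hc : Continuous f) : Function.Surjective f := by
  have hlin : Tendsto (fun s => f 0 + a * s) atTop atTop :=
    tendsto_atTop_add_const_left _ _ (tendsto_id.const_mul_atTop ha)
  have hlin' : Tendsto (fun s => f 0 + a * s) atBot atBot :=
    tendsto_atBot_add_const_left _ _ (tendsto_id.const_mul_atBot ha)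
  refine hc.surjective (tendsto_atTop_mono' _ ?_ hlin) (tendsto_atBot_mono' _ ?_ hlin')
  · filter_upwards [eventually_ge_atTop 0] with s hs
    simpa using hf 0 s hs
  · filter_upwards [eventually_le_atBot 0] with s hs
    simpa using hf s 0 hs

lemma slope_mem_Icc_of_rightInverse {K : ℝ} {φ : ℝ → ℝ} (ha : 0 < a)
    (hf : ∀ s t, s ≤ t → f s + a * (t - s) ≤ f t) (hK : ∀ s t, |f s - f t| ≤ K * |s - t|)
    (hφ : ∀ s, f (φ s) = s) {s t : ℝ} (hst : s < t) : slope φ s t ∈ Icc K⁻¹ a⁻¹ := by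
  have hts : 0 < t - s := sub_pos.2 hst
  have hmono : φ s ≤ φ t := by
    by_contra! hlt
    have := hf _ _ hlt.le
    rw [hφ, hφ] at this
    linarith [mul_pos ha (sub_pos.2 hlt)]
  have hlo : t - s ≤ K * (φ t - φ s) := by
    simpa [hφ, abs_of_pos hts, abs_of_nonneg (sub_nonneg.2 hmono)] using hK (φ t) (φ s)
  have hhi : a * (φ t - φ s) ≤ t - s := by
    have := hf _ _ hmono
    rw [hφ, hφ] at this
    linarith
  rw [slope_def_field]
  constructor
  · rcases le_or_gt K 0 with hK0 | hK0
    · exact (inv_nonpos.2 hK0).trans (div_nonneg (sub_nonneg.2 hmono) hts.le)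
    · rw [le_div_iff₀ hts, inv_mul_le_iff₀ hK0]
      exact hlo
  · rw [div_le_iff₀ hts, ← div_eq_inv_mul, le_div_iff₀ ha, mul_comm]
    exact hhi

lemma mul_abs_sub_le_of_expanding_of_abs_sub_le {f₁ f₂ : ℝ → ℝ} {δ x₁ x₂ : ℝ}
    (hf₂ : ∀ s t, s ≤ t → f₂ s + a * (t - s) ≤ f₂ t) (hδ : ∀ s, |f₁ s - f₂ s| ≤ δ) :
    a * |x₁ - x₂| ≤ |f₁ x₁ - f₂ x₂| + δ :=
  calc a * |x₁ - x₂| ≤ |f₂ x₁ - f₂ x₂| := mul_abs_sub_le_of_expanding hf₂ x₂ x₁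
    _ ≤ |f₂ x₁ - f₁ x₁| + |f₁ x₁ - f₂ x₂| := abs_sub_le _ _ _
    _ ≤ |f₁ x₁ - f₂ x₂| + δ := by rw [abs_sub_comm]; linarith [hδ x₁]

end Expanding

lemma HasDerivAt.mem_Icc_of_slope_mem_Icc {φ : ℝ → ℝ} {c x α β : ℝ} (h : HasDerivAt φ c x)
    (hs : ∀ y, x < y → slope φ x y ∈ Icc α β) : c ∈ Icc α β :=
  isClosed_Icc.mem_of_tendsto (hasDerivAt_iff_tendsto_slope_left_right.1 h).2
    (eventually_nhdsWithin_of_forall hs)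

lemma abs_sub_le_sqrt_sum_sq_sub {ι : Type*} [Fintype ι] (y y' : ι → ℝ) (k : ι) :
    |y k - y' k| ≤ √(∑ i, (y i - y' i) ^ 2) :=
  Real.abs_le_sqrt (Finset.single_le_sum (f := fun i => (y i - y' i) ^ 2)
    (fun _ _ => sq_nonneg _) (Finset.mem_univ k))

lemma sqrt_sum_sq_sub_update_le {ι : Type*} [Fintype ι] [DecidableEq ι] (y y' : ι → ℝ) (k : ι)
    (s : ℝ) :
    √(∑ i, (Function.update y k s i - Function.update y' k s i) ^ 2) ≤
      √(∑ i, (y i - y' i) ^ 2) := by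
  refine Real.sqrt_le_sqrt (Finset.sum_le_sum fun i _ => ?_)
  rcases eq_or_ne i k with rfl | hi
  · simpa using sq_nonneg (y i - y' i)
  · simp only [Function.update_of_ne hi, le_refl]

lemma LinearMap.exists_sqrt_sum_sq_map_le {ι κ : Type*} [Fintype ι] [Fintype κ]
    (T : (ι → ℝ) →ₗ[ℝ] (κ → ℝ)) :
    ∃ C, 0 ≤ C ∧ ∀ u, √(∑ i, (T u i) ^ 2) ≤ C * √(∑ i, (u i) ^ 2) := by
  let T' : EuclideanSpace ℝ ι →L[ℝ] EuclideanSpace ℝ κ := LinearMap.toContinuousLinearMap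
    ((WithLp.linearEquiv 2 ℝ (κ → ℝ)).symm.toLinearMap ∘ₗ T ∘ₗ
      (WithLp.linearEquiv 2 ℝ (ι → ℝ)).toLinearMap)
  refine ⟨‖T'‖, norm_nonneg _, fun u => ?_⟩
  simpa [T', EuclideanSpace.norm_eq] using T'.le_opNorm (WithLp.toLp 2 u)

section ChangeOfVariables

variable {n : ℕ}

lemma Rmap_add (x x' : Fin (n+1) → ℝ) : Rmap (x + x') = Rmap x + Rmap x' := by
  funext j
  by_cases hj : (j : ℕ) < n
  · simp only [Rmap, hj, ↓reduceIte, Pi.add_apply]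
    ring
  · simp [Rmap, hj, Finset.sum_add_distrib]

lemma Rmap_smul (c : ℝ) (x : Fin (n+1) → ℝ) : Rmap (c • x) = c • Rmap x := by
  funext j
  by_cases hj : (j : ℕ) < n
  · simp only [Rmap, hj, ↓reduceIte, Pi.smul_apply, smul_eq_mul]
    ring
  · simp [Rmap, hj, Finset.mul_sum]

noncomputable def RmapLinear : (Fin (n+1) → ℝ) →ₗ[ℝ] (Fin (n+1) → ℝ) where
  toFun := Rmap
  map_add' := Rmap_add
  map_smul' := Rmap_smul

lemma Rmap_add_const (x : Fin (n+1) → ℝ) (c : ℝ) :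
    Rmap (fun i => x i + c) =
      Function.update (Rmap x) (Fin.last n) (Rmap x (Fin.last n) + (n + 1) * c) := by
  funext j
  rcases eq_or_ne j (Fin.last n) with rfl | hj
  · simp [Rmap, Finset.sum_add_distrib]
  · have hjn : (j : ℕ) < n := Fin.val_lt_last hj
    simp [Rmap, hjn, Function.update_of_ne hj]

variable {Rinv : (Fin (n+1) → ℝ) → (Fin (n+1) → ℝ)}

lemma Rinv_update_last (hRinv : ∀ x, Rinv (Rmap x) = x) (hRinv' : ∀ y, Rmap (Rinv y) = y)
    (y : Fin (n+1) → ℝ) (s t : ℝ) :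
    Rinv (Function.update y (Fin.last n) t) =
      fun i => Rinv (Function.update y (Fin.last n) s) i + (t - s) / (n + 1) := by
  rw [← hRinv (fun i => _ + _), Rmap_add_const, hRinv', Function.update_idem,
    Function.update_self, mul_div_cancel₀ _ (by positivity), add_sub_cancel]

end ChangeOfVariables

section Slice

variable {n : ℕ} {g : (Fin (n+1) → ℝ) → ℝ} {Rinv : (Fin (n+1) → ℝ) → (Fin (n+1) → ℝ)}

/-- `ḡ(y₁, …, y_{n-1}, s)` as a function of `s`; the last coordinate of `y` is ignored. -/
def gbarSlice (g : (Fin (n+1) → ℝ) → ℝ) (Rinv : (Fin (n+1) → ℝ) → (Fin (n+1) → ℝ))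
    (y : Fin (n+1) → ℝ) (s : ℝ) : ℝ :=
  g (Rinv (Function.update y (Fin.last n) s))

lemma gbarSlice_update_last (y : Fin (n+1) → ℝ) (t : ℝ) :
    gbarSlice g Rinv (Function.update y (Fin.last n) t) = gbarSlice g Rinv y := by
  funext s
  simp [gbarSlice]

lemma gbarSlice_expanding {θ : ℝ}
    (hmono : ∀ (x : Fin (n+1) → ℝ) (s : ℝ), 0 ≤ s → g x + θ * s ≤ g (fun i => x i + s))
    (hRinv : ∀ x, Rinv (Rmap x) = x) (hRinv' : ∀ y, Rmap (Rinv y) = y)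
    (y : Fin (n+1) → ℝ) (s t : ℝ) (hst : s ≤ t) :
    gbarSlice g Rinv y s + θ / (n + 1) * (t - s) ≤ gbarSlice g Rinv y t := by
  have h := hmono (Rinv (Function.update y (Fin.last n) s)) ((t - s) / (n + 1))
    (by have := sub_nonneg.2 hst; positivity)
  rwa [← Rinv_update_last hRinv hRinv', mul_div_assoc', mul_div_right_comm] at h

lemma gbarSlice_lipschitz {L : ℝ}
    (hLip : ∀ x y : Fin (n+1) → ℝ, |g x - g y| ≤ L * Real.sqrt (∑ i, (x i - y i)^2))
    (hRinv : ∀ x, Rinv (Rmap x) = x) (hRinv' : ∀ y, Rmap (Rinv y) = y)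
    (y : Fin (n+1) → ℝ) (s t : ℝ) :
    |gbarSlice g Rinv y s - gbarSlice g Rinv y t| ≤ L / √(n + 1) * |s - t| := by
  have hdist : √(∑ i, (Rinv (Function.update y (Fin.last n) s) i
      - Rinv (Function.update y (Fin.last n) t) i) ^ 2) = |s - t| / √(n + 1) := by
    rw [Rinv_update_last hRinv hRinv' y t s]
    have : (n + 1 : ℝ) * ((s - t) / (n + 1)) ^ 2 = (s - t) ^ 2 / (n + 1) := by
      field_simp
    simp [this, Real.sqrt_div (sq_nonneg _), Real.sqrt_sq_eq_abs]
  have h := hLip (Rinv (Function.update y (Fin.last n) s))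
    (Rinv (Function.update y (Fin.last n) t))
  rw [hdist] at h
  rwa [div_mul_eq_mul_div, mul_div_assoc]

lemma exists_abs_gbarSlice_sub_le {L : ℝ} (hL : 0 ≤ L)
    (hLip : ∀ x y : Fin (n+1) → ℝ, |g x - g y| ≤ L * Real.sqrt (∑ i, (x i - y i)^2))
    (hRinv : ∀ x, Rinv (Rmap x) = x) (hRinv' : ∀ y, Rmap (Rinv y) = y) :
    ∃ M, ∀ y y' s, |gbarSlice g Rinv y s - gbarSlice g Rinv y' s| ≤
      M * √(∑ i, (y i - y' i) ^ 2) := by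
  obtain ⟨C, hC0, hC⟩ := (RmapLinear.inverse Rinv hRinv hRinv').exists_sqrt_sum_sq_map_le
  refine ⟨L * C, fun y y' s => ?_⟩
  set u := Function.update y (Fin.last n) s
  set u' := Function.update y' (Fin.last n) s
  have hRinv_sub : Rinv u - Rinv u' = RmapLinear.inverse Rinv hRinv hRinv' (u - u') := by
    rw [map_sub]; rfl
  calc |g (Rinv u) - g (Rinv u')|
      ≤ L * √(∑ i, (Rinv u i - Rinv u' i) ^ 2) := hLip _ _
    _ ≤ L * (C * √(∑ i, (u i - u' i) ^ 2)) := by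
      gcongr
      simpa only [← hRinv_sub, Pi.sub_apply] using hC (u - u')
    _ ≤ L * C * √(∑ i, (y i - y' i) ^ 2) := by
      rw [← mul_assoc]
      exact mul_le_mul_of_nonneg_left (sqrt_sum_sq_sub_update_le y y' _ s) (mul_nonneg hL hC0)

end Slice

theorem stmt13_general {n : ℕ} (g : (Fin (n+1) → ℝ) → ℝ)
    (L θ : ℝ) (hL : 0 < L) (hθ : 0 < θ)
    (hLip : ∀ x y : Fin (n+1) → ℝ, |g x - g y| ≤ L * Real.sqrt (∑ i, (x i - y i)^2))
    (hmono : ∀ (x : Fin (n+1) → ℝ) (s : ℝ), 0 ≤ s → g x + θ * s ≤ g (fun i => x i + s))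
    (Rinv : (Fin (n+1) → ℝ) → (Fin (n+1) → ℝ))
    (hRinv : ∀ x, Rinv (Rmap x) = x) (hRinv' : ∀ y, Rmap (Rinv y) = y) :
    ∃ (h0 : (Fin (n+1) → ℝ) → ℝ) (K : ℝ),
      (∀ w w' : Fin (n+1) → ℝ, |h0 w - h0 w'| ≤ K * Real.sqrt (∑ i, (w i - w' i)^2)) ∧
      (∀ w : Fin (n+1) → ℝ,
        g (Rinv (Function.update w (Fin.last n) (h0 w))) = w (Fin.last n)) ∧
      (∀ (w : Fin (n+1) → ℝ) (c : ℝ),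
        HasDerivAt (fun s => h0 (Function.update w (Fin.last n) s)) c (w (Fin.last n)) →
        Real.sqrt (n+1) / L ≤ c ∧ c ≤ (n+1) / θ) := by
  have ha : 0 < θ / (n + 1) := by positivity
  have hexp := gbarSlice_expanding hmono hRinv hRinv'
  have hlip := gbarSlice_lipschitz hLip hRinv hRinv'
  have hsurj (y : Fin (n+1) → ℝ) : Function.Surjective (gbarSlice g Rinv y) :=
    surjective_of_expanding ha (hexp y)
      (LipschitzWith.of_dist_le' fun s t => by simpa [Real.dist_eq] using hlip y s t).continuous
  choose h0 hh0 using fun w => hsurj w (w (Fin.last n))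
  obtain ⟨M, hM⟩ := exists_abs_gbarSlice_sub_le hL.le hLip hRinv hRinv'
  refine ⟨h0, (1 + M) / (θ / (n + 1)), fun w w' => ?_, hh0, fun w c hc => ?_⟩
  · have h := mul_abs_sub_le_of_expanding_of_abs_sub_le (x₁ := h0 w) (x₂ := h0 w')
      (hexp w') (hM w w')
    rw [hh0, hh0] at h
    rw [div_mul_eq_mul_div, le_div_iff₀ ha]
    linarith [abs_sub_le_sqrt_sum_sq_sub w w' (Fin.last n)]
  · have hinv (s : ℝ) : gbarSlice g Rinv w (h0 (Function.update w (Fin.last n) s)) = s := by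
      simpa [gbarSlice_update_last] using hh0 (Function.update w (Fin.last n) s)
    simpa [inv_div] using hc.mem_Icc_of_slope_mem_Icc fun t hst =>
      slope_mem_Icc_of_rightInverse ha (hexp w) (hlip w) hinv hst

/-- Proposition 5.6: for g Lipschitz and θ-increasing, with ḡ = g ∘ R⁻¹, there
is a Lipschitz function h⁰ with ḡ(y₁,…,y_{n-1}, h⁰(y₁,…,y_{n-1},s)) = s, and wherever the
partial derivative ∂h⁰/∂s exists it lies in [√n/Lip(g), n/θ].  (Paper n = n+1 here; the
argument vector of h⁰ carries (y₁,…,y_{n-1}) in its first n coordinates and s in its last.) -/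
theorem stmt13 {n : ℕ} (hn : 1 ≤ n) (g : (Fin (n+1) → ℝ) → ℝ)
    (L θ : ℝ) (hL : 0 < L) (hθ : 0 < θ)
    (hLip : ∀ x y : Fin (n+1) → ℝ, |g x - g y| ≤ L * Real.sqrt (∑ i, (x i - y i)^2))
    (hmono : ∀ (x : Fin (n+1) → ℝ) (s : ℝ), 0 ≤ s → g x + θ * s ≤ g (fun i => x i + s))
    (Rinv : (Fin (n+1) → ℝ) → (Fin (n+1) → ℝ))
    (hRinv : ∀ x, Rinv (Rmap x) = x) (hRinv' : ∀ y, Rmap (Rinv y) = y) :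
    ∃ (h0 : (Fin (n+1) → ℝ) → ℝ) (K : ℝ),
      (∀ w w' : Fin (n+1) → ℝ, |h0 w - h0 w'| ≤ K * Real.sqrt (∑ i, (w i - w' i)^2)) ∧
      (∀ w : Fin (n+1) → ℝ,
        g (Rinv (Function.update w (Fin.last n) (h0 w))) = w (Fin.last n)) ∧
      (∀ (w : Fin (n+1) → ℝ) (c : ℝ),
        HasDerivAt (fun s => h0 (Function.update w (Fin.last n) s)) c (w (Fin.last n)) →
        Real.sqrt (n+1) / L ≤ c ∧ c ≤ (n+1) / θ) :=
  stmt13_general g L θ hL hθ hLip hmono Rinv hRinv hRinv'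
end

section
/- If additionally g satisfies the translation property g(x + s𝟙) = g(x) + s for all x ∈ ℝⁿ, s ∈ ℝ, then the level-set function h⁰ from the previous statement is given explicitly by h⁰(y₁,…,y_{n-1},s) = yₙ − n ḡ(y) + n s for all y ∈ ℝⁿ and s ∈ ℝ. -/
namespace Rmap

variable {n : ℕ}

theorem apply_last (x : Fin (n+1) → ℝ) : Rmap x (Fin.last n) = ∑ i, x i := by
  simp [Rmap]

theorem apply_of_lt (x : Fin (n+1) → ℝ) {j : Fin (n+1)} (hj : (j : ℕ) < n) :
    Rmap x j = x j - x (Fin.last n) := if_pos hj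

theorem add_const (x : Fin (n+1) → ℝ) (c : ℝ) :
    Rmap (fun i => x i + c) =
      Function.update (Rmap x) (Fin.last n) (Rmap x (Fin.last n) + (n+1) * c) := by
  funext j
  obtain ⟨j, rfl⟩ | rfl := j.eq_castSucc_or_eq_last
  · have hj : ((Fin.castSucc j : Fin (n+1)) : ℕ) < n := j.isLt
    rw [Function.update_of_ne (Fin.castSucc_ne_last j), apply_of_lt _ hj, apply_of_lt _ hj]
    ring
  · simp [apply_last, Finset.sum_add_distrib]

end Rmap

theorem comp_Rinv_update_last {n : ℕ} {g : (Fin (n+1) → ℝ) → ℝ}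
    (htrans : ∀ (x : Fin (n+1) → ℝ) (s : ℝ), g (fun i => x i + s) = g x + s)
    {Rinv : (Fin (n+1) → ℝ) → (Fin (n+1) → ℝ)}
    (hRinv : ∀ x, Rinv (Rmap x) = x) (hRinv' : ∀ y, Rmap (Rinv y) = y)
    (y : Fin (n+1) → ℝ) (t : ℝ) :
    g (Rinv (Function.update y (Fin.last n) t))
      = g (Rinv y) + (t - y (Fin.last n)) / (n+1) := by
  have hshift : Function.update y (Fin.last n) t
      = Rmap (fun i => Rinv y i + (t - y (Fin.last n)) / (n+1)) := by
    rw [Rmap.add_const, hRinv']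
    congr 1
    field_simp
    ring
  rw [hshift, hRinv, htrans]

theorem stmt14_general {n : ℕ} (g : (Fin (n+1) → ℝ) → ℝ)
    (htrans : ∀ (x : Fin (n+1) → ℝ) (s : ℝ), g (fun i => x i + s) = g x + s)
    (Rinv : (Fin (n+1) → ℝ) → (Fin (n+1) → ℝ))
    (hRinv : ∀ x, Rinv (Rmap x) = x) (hRinv' : ∀ y, Rmap (Rinv y) = y)
    (h0 : (Fin (n+1) → ℝ) → ℝ)
    (hlevel : ∀ w : Fin (n+1) → ℝ,
      g (Rinv (Function.update w (Fin.last n) (h0 w))) = w (Fin.last n)) :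
    ∀ (y : Fin (n+1) → ℝ) (s : ℝ),
      h0 (Function.update y (Fin.last n) s)
        = y (Fin.last n) - (n+1) * g (Rinv y) + (n+1) * s := by
  intro y s
  have h := hlevel (Function.update y (Fin.last n) s)
  rw [Function.update_idem, Function.update_self,
    comp_Rinv_update_last htrans hRinv hRinv'] at h
  field_simp at h
  linarith

/-- if in addition g satisfies the translation property g(x+s𝟙) = g(x)+s, then
the level-set function h⁰ satisfies h⁰(y₁,…,y_{n-1},s) = yₙ − n ḡ(y) + n s for all y, s
(paper n = our n+1, ḡ = g ∘ R⁻¹). -/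
theorem stmt14 {n : ℕ} (hn : 1 ≤ n) (g : (Fin (n+1) → ℝ) → ℝ)
    (htrans : ∀ (x : Fin (n+1) → ℝ) (s : ℝ), g (fun i => x i + s) = g x + s)
    (Rinv : (Fin (n+1) → ℝ) → (Fin (n+1) → ℝ))
    (hRinv : ∀ x, Rinv (Rmap x) = x) (hRinv' : ∀ y, Rmap (Rinv y) = y)
    (h0 : (Fin (n+1) → ℝ) → ℝ)
    (hlevel : ∀ w : Fin (n+1) → ℝ,
      g (Rinv (Function.update w (Fin.last n) (h0 w))) = w (Fin.last n)) :
    ∀ (y : Fin (n+1) → ℝ) (s : ℝ),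
      h0 (Function.update y (Fin.last n) s)
        = y (Fin.last n) - (n+1) * g (Rinv y) + (n+1) * s :=
  stmt14_general g htrans Rinv hRinv hRinv' h0 hlevel
end

section
/- Let h : ℝ^{n-1} × [0,1] → ℝ be a C² function solving the linear backward heat equation h_t + Tr(A∇²h) = 0 on ℝ^{n-1} × (0,1), where A = (1/2^{d+1}) Σ_{m∈ℬ^d} r(m)⊗r(m) and r(m) = (q₁(m)−qₙ(m),…,q_{n-1}(m)−qₙ(m)). Define u(x,t) = h(x₁−xₙ,…,x_{n-1}−xₙ, t) + (x₁+⋯+xₙ)/n. Then: (a) ⟨∇u(x,t), 𝟙⟩ = 1 for all (x,t); (b) ∇²u(x,t)𝟙 = 0; (c) ⟨∇²u(x,t) q(m), q(m)⟩ = ⟨∇²h(y,t) r(m), r(m)⟩ with y = (x₁−xₙ,…,x_{n-1}−xₙ); and consequently (d) u satisfies u_t + (1/2^{d+1}) Σ_{m∈ℬ^d} ⟨∇²u q(m), q(m)⟩ = 0 on ℝⁿ × (0,1). -/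
/-- Partial derivative of φ : ℝ^N → ℝ in coordinate i at y. -/
noncomputable def pderiv {N : ℕ} (φ : (Fin N → ℝ) → ℝ) (i : Fin N) (y : Fin N → ℝ) : ℝ :=
  deriv (fun s => φ (Function.update y i s)) (y i)

/-- Second partial derivative ∂ᵢ∂ⱼφ. -/
noncomputable def pderiv2 {N : ℕ} (φ : (Fin N → ℝ) → ℝ) (i j : Fin N) (y : Fin N → ℝ) : ℝ :=
  pderiv (fun z => pderiv φ j z) i y

/-! Writing `D x = (x₀ - xₙ, …, x_{n-1} - xₙ)` and `μ x = (∑ xᵢ)/(n+1)`, the time slice of `u` is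
`h(·, t) ∘ D + μ` with `D, μ` linear, so `∇²u(x) = Dᵀ ∇²h(Dx) D`. Since `D 𝟙 = 0`, `μ 𝟙 = 1` and
`D q(m) = r(m)`, this gives (a), (b) and (c); summing (c) over `m` turns the sum in (d) into
`Tr(A ∇²h)`, and `u_t = h_t` at `Dx`, so (d) is the equation for `h`. -/

open Finset

section Slice

variable {𝕜 E F : Type*} [NontriviallyNormedField 𝕜] [NormedAddCommGroup E] [NormedSpace 𝕜 E]
  [NormedAddCommGroup F] [NormedSpace 𝕜 F]

lemma ContDiffOn.contDiff_slice {k : WithTop ℕ∞} {f : E × 𝕜 → F} {s : Set 𝕜}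
    (hf : ContDiffOn 𝕜 k f (Set.univ ×ˢ s)) {t : 𝕜} (ht : s ∈ nhds t) :
    ContDiff 𝕜 k fun w => f (w, t) :=
  contDiff_iff_contDiffAt.2 fun w =>
    (hf.contDiffAt (prod_mem_nhds Filter.univ_mem ht)).comp w
      (contDiffAt_id.prodMk contDiffAt_const)

end Slice

section Comp

variable {𝕜 E F G : Type*} [NontriviallyNormedField 𝕜] [NormedAddCommGroup E] [NormedSpace 𝕜 E]
  [NormedAddCommGroup F] [NormedSpace 𝕜 F] [NormedAddCommGroup G] [NormedSpace 𝕜 G]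
  {φ : F → G} (L : E →L[𝕜] F) (ℓ : E →L[𝕜] G)

lemma fderiv_comp_clm_add_clm {x : E} (hφ : DifferentiableAt 𝕜 φ (L x)) :
    fderiv 𝕜 (fun z => φ (L z) + ℓ z) x = (fderiv 𝕜 φ (L x)).comp L + ℓ :=
  ((hφ.hasFDerivAt.comp x L.hasFDerivAt).add ℓ.hasFDerivAt).fderiv

lemma fderiv_fderiv_comp_clm_add_clm_apply (hφ : ContDiff 𝕜 2 φ) (x v w : E) :
    fderiv 𝕜 (fderiv 𝕜 fun z => φ (L z) + ℓ z) x v w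
      = fderiv 𝕜 (fderiv 𝕜 φ) (L x) (L v) (L w) := by
  have hφL : Differentiable 𝕜 (φ ∘ L) := (hφ.differentiable two_ne_zero).comp L.differentiable
  have hfd : fderiv 𝕜 (fun z => φ (L z) + ℓ z) = fun z => fderiv 𝕜 (φ ∘ L) z + ℓ := by
    funext z
    exact ((hφL z).hasFDerivAt.add ℓ.hasFDerivAt).fderiv
  have h2 := iteratedFDeriv_two_apply (𝕜 := 𝕜) (φ ∘ L) x ![v, w]
  rw [L.iteratedFDeriv_comp_right hφ x le_rfl,
    ContinuousMultilinearMap.compContinuousLinearMap_apply, iteratedFDeriv_two_apply] at h2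
  rw [hfd, fderiv_add_const]
  exact h2.symm

end Comp

section PartialDerivatives

variable {N : ℕ} {φ : (Fin N → ℝ) → ℝ} {y : Fin N → ℝ}

lemma ContinuousLinearMap.apply_eq_sum_smul_apply_single {ι M : Type*} [Fintype ι]
    [DecidableEq ι] [NormedAddCommGroup M] [NormedSpace ℝ M] (D : (ι → ℝ) →L[ℝ] M) (v : ι → ℝ) :
    D v = ∑ i, v i • D (Pi.single i 1) := by
  conv_lhs => rw [pi_eq_sum_univ' v]
  simp only [map_sum, map_smul]

lemma pderiv_eq_fderiv_apply (hφ : DifferentiableAt ℝ φ y) (i : Fin N) :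
    pderiv φ i y = fderiv ℝ φ y (Pi.single i 1) := by
  have hchain := fderiv_comp_deriv (y i) (by rwa [Function.update_eq_self])
    (hasDerivAt_update y i (y i)).differentiableAt
  rwa [Function.update_eq_self, deriv_update] at hchain

lemma pderiv2_eq_fderiv_fderiv_apply (hφ : Differentiable ℝ φ)
    (hφ' : DifferentiableAt ℝ (fderiv ℝ φ) y) (i j : Fin N) :
    pderiv2 φ i j y = fderiv ℝ (fderiv ℝ φ) y (Pi.single i 1) (Pi.single j 1) := by
  have hj : (fun z => pderiv φ j z) = fun z => fderiv ℝ φ z (Pi.single j 1) :=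
    funext fun z => pderiv_eq_fderiv_apply (hφ z) j
  rw [pderiv2, hj, pderiv_eq_fderiv_apply (hφ'.clm_apply (differentiableAt_const _)),
    fderiv_clm_apply hφ' (differentiableAt_const _)]
  simp

lemma sum_pderiv_mul (hφ : DifferentiableAt ℝ φ y) (v : Fin N → ℝ) :
    ∑ i, pderiv φ i y * v i = fderiv ℝ φ y v := by
  simp only [pderiv_eq_fderiv_apply hφ, (fderiv ℝ φ y).apply_eq_sum_smul_apply_single v, smul_eq_mul,
    mul_comm]

variable (hφ : ContDiff ℝ 2 φ)
include hφ

lemma sum_pderiv2_mul (i : Fin N) (v : Fin N → ℝ) :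
    ∑ j, pderiv2 φ i j y * v j = fderiv ℝ (fderiv ℝ φ) y (Pi.single i 1) v := by
  have hφ' : Differentiable ℝ (fderiv ℝ φ) := (hφ.fderiv_right le_rfl).differentiable one_ne_zero
  simp only [pderiv2_eq_fderiv_fderiv_apply (hφ.differentiable two_ne_zero) (hφ' y),
    (fderiv ℝ (fderiv ℝ φ) y (Pi.single i 1)).apply_eq_sum_smul_apply_single v, smul_eq_mul,
    mul_comm]

lemma sum_sum_pderiv2_mul_mul (v w : Fin N → ℝ) :
    ∑ i, ∑ j, pderiv2 φ i j y * v i * w j = fderiv ℝ (fderiv ℝ φ) y v w := by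
  calc ∑ i, ∑ j, pderiv2 φ i j y * v i * w j
      = ∑ i, v i * ∑ j, pderiv2 φ i j y * w j := by
        simp only [mul_sum]
        exact sum_congr rfl fun i _ => sum_congr rfl fun j _ => by ring
    _ = fderiv ℝ (fderiv ℝ φ) y v w := by
      simp only [sum_pderiv2_mul hφ, (fderiv ℝ (fderiv ℝ φ) y).apply_eq_sum_smul_apply_single v,
        FunLike.coe_sum, Finset.sum_apply, FunLike.coe_smul,
        Pi.smul_apply, smul_eq_mul]

end PartialDerivatives

section Coordinates

variable (n : ℕ)

def lastDiff : (Fin (n + 1) → ℝ) →L[ℝ] (Fin n → ℝ) :=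
  ContinuousLinearMap.pi fun j =>
    ContinuousLinearMap.proj (R := ℝ) (φ := fun _ => ℝ) j.castSucc
      - ContinuousLinearMap.proj (Fin.last n)

noncomputable def coordMean : (Fin (n + 1) → ℝ) →L[ℝ] ℝ :=
  ((n : ℝ) + 1)⁻¹ • ∑ i, ContinuousLinearMap.proj i

variable {n}

lemma lastDiff_apply (x : Fin (n + 1) → ℝ) :
    lastDiff n x = fun j => x j.castSucc - x (Fin.last n) := by
  ext j
  simp [lastDiff]

lemma coordMean_apply (x : Fin (n + 1) → ℝ) : coordMean n x = (∑ i, x i) / (n + 1) := by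
  simp [coordMean, div_eq_inv_mul]

lemma lastDiff_const (c : ℝ) : lastDiff n (fun _ => c) = 0 := by
  simp [lastDiff_apply, Pi.zero_def]

lemma coordMean_const (c : ℝ) : coordMean n (fun _ => c) = c := by
  rw [coordMean_apply, sum_const, card_univ, Fintype.card_fin, nsmul_eq_mul, Nat.cast_succ]
  field_simp

end Coordinates

theorem stmt15_general {n d : ℕ} (q : (Fin d → Bool) → Fin (n+1) → ℝ)
    (h : (Fin n → ℝ) → ℝ → ℝ)
    (hsmooth : ContDiffOn ℝ 2 (fun p : (Fin n → ℝ) × ℝ => h p.1 p.2)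
      (Set.univ ×ˢ Set.Icc 0 1))
    (hPDE : ∀ (y : Fin n → ℝ) (t : ℝ), t ∈ Set.Ioo (0:ℝ) 1 →
      deriv (fun τ => h y τ) t
        + ∑ i, ∑ j,
            ((1 / 2^(d+1)) * ∑ m : Fin d → Bool,
                (q m i.castSucc - q m (Fin.last n)) * (q m j.castSucc - q m (Fin.last n)))
              * pderiv2 (fun w => h w t) i j y = 0)
    (u : (Fin (n+1) → ℝ) → ℝ → ℝ)
    (hu : ∀ (x : Fin (n+1) → ℝ) (t : ℝ),
      u x t = h (fun i => x i.castSucc - x (Fin.last n)) t + (∑ i, x i) / (n+1)) :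
    ∀ (x : Fin (n+1) → ℝ) (t : ℝ), t ∈ Set.Ioo (0:ℝ) 1 →
      -- (a) ⟨∇u(x,t), 𝟙⟩ = 1
      (∑ i, pderiv (fun z => u z t) i x = 1) ∧
      -- (b) ∇²u(x,t) 𝟙 = 0
      (∀ i, ∑ j, pderiv2 (fun z => u z t) i j x = 0) ∧
      -- (c) ⟨∇²u q(m), q(m)⟩ = ⟨∇²h r(m), r(m)⟩
      (∀ m : Fin d → Bool,
        ∑ i, ∑ j, pderiv2 (fun z => u z t) i j x * q m i * q m j
          = ∑ i : Fin n, ∑ j : Fin n,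
              pderiv2 (fun w => h w t) i j (fun i => x i.castSucc - x (Fin.last n))
                * (q m i.castSucc - q m (Fin.last n)) * (q m j.castSucc - q m (Fin.last n))) ∧
      -- (d) u_t + (1/2^{d+1}) Σ_m ⟨∇²u q(m), q(m)⟩ = 0
      (deriv (fun τ => u x τ) t
        + (1 / 2^(d+1)) * ∑ m : Fin d → Bool,
            ∑ i, ∑ j, pderiv2 (fun z => u z t) i j x * q m i * q m j = 0) := by
  intro x t ht
  have hh : ContDiff ℝ 2 fun w => h w t := hsmooth.contDiff_slice (Icc_mem_nhds ht.1 ht.2)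
  have hu_t : (fun z => u z t) = fun z => h (lastDiff n z) t + coordMean n z :=
    funext fun z => by rw [hu, lastDiff_apply, coordMean_apply]
  have hU : ContDiff ℝ 2 fun z => u z t :=
    hu_t ▸ (hh.comp (lastDiff n).contDiff).add (coordMean n).contDiff
  have hessian (v w : Fin (n + 1) → ℝ) :
      fderiv ℝ (fderiv ℝ fun z => u z t) x v w
        = fderiv ℝ (fderiv ℝ fun w => h w t) (lastDiff n x) (lastDiff n v) (lastDiff n w) := by
    rw [hu_t]
    exact fderiv_fderiv_comp_clm_add_clm_apply _ _ hh x v w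
  have hc (m : Fin d → Bool) :
      ∑ i, ∑ j, pderiv2 (fun z => u z t) i j x * q m i * q m j
        = ∑ i : Fin n, ∑ j : Fin n,
            pderiv2 (fun w => h w t) i j (fun i => x i.castSucc - x (Fin.last n))
              * (q m i.castSucc - q m (Fin.last n)) * (q m j.castSucc - q m (Fin.last n)) := by
    rw [sum_sum_pderiv2_mul_mul hU, sum_sum_pderiv2_mul_mul hh, hessian, lastDiff_apply,
      lastDiff_apply]
  refine ⟨?_, fun i => ?_, hc, ?_⟩
  · have hdiff : DifferentiableAt ℝ (fun w => h w t) (lastDiff n x) :=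
      hh.differentiable two_ne_zero _
    simpa [hu_t, fderiv_comp_clm_add_clm _ _ hdiff, lastDiff_const, coordMean_const]
      using sum_pderiv_mul (hU.differentiable two_ne_zero x) fun _ => 1
  · simpa [hessian, lastDiff_const] using sum_pderiv2_mul hU (y := x) i fun _ => 1
  · have h_time : deriv (fun τ => u x τ) t = deriv (fun τ => h (lastDiff n x) τ) t := by
      simp_rw [hu, deriv_add_const, lastDiff_apply]
    -- `Tr(A ∇²h) = 2^-(d+1) ∑ₘ ⟨∇²h r(m), r(m)⟩`
    rw [h_time, sum_congr rfl fun m _ => hc m, ← hPDE (lastDiff n x) t ht, lastDiff_apply]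
    congr 1
    simp only [mul_sum, sum_mul]
    rw [sum_comm]
    refine sum_congr rfl fun i _ => ?_
    rw [sum_comm]
    exact sum_congr rfl fun j _ => sum_congr rfl fun m _ => by ring

/-- part of Theorem 5.7: if h is C² on ℝ^{n-1} × [0,1] and solves the linear
backward heat equation h_t + Tr(A ∇²h) = 0 on ℝ^{n-1} × (0,1) with
A = (1/2^{d+1}) Σ_m r(m)⊗r(m), then u(x,t) = h(x₁−xₙ,…,x_{n-1}−xₙ,t) + (x₁+⋯+xₙ)/n
satisfies (a) ⟨∇u,𝟙⟩ = 1, (b) ∇²u 𝟙 = 0, (c) ⟨∇²u q(m),q(m)⟩ = ⟨∇²h r(m),r(m)⟩, and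
(d) u_t + (1/2^{d+1}) Σ_m ⟨∇²u q(m),q(m)⟩ = 0 on ℝⁿ × (0,1).  (Paper n = our n+1.) -/
theorem stmt15 {n d : ℕ} (hn : 1 ≤ n) (q : (Fin d → Bool) → Fin (n+1) → ℝ)
    (hq : ∀ m i, q m i ∈ Set.Icc (-1:ℝ) 1)
    (h : (Fin n → ℝ) → ℝ → ℝ)
    (hsmooth : ContDiffOn ℝ 2 (fun p : (Fin n → ℝ) × ℝ => h p.1 p.2)
      (Set.univ ×ˢ Set.Icc 0 1))
    (hPDE : ∀ (y : Fin n → ℝ) (t : ℝ), t ∈ Set.Ioo (0:ℝ) 1 →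
      deriv (fun τ => h y τ) t
        + ∑ i, ∑ j,
            ((1 / 2^(d+1)) * ∑ m : Fin d → Bool,
                (q m i.castSucc - q m (Fin.last n)) * (q m j.castSucc - q m (Fin.last n)))
              * pderiv2 (fun w => h w t) i j y = 0)
    (u : (Fin (n+1) → ℝ) → ℝ → ℝ)
    (hu : ∀ (x : Fin (n+1) → ℝ) (t : ℝ),
      u x t = h (fun i => x i.castSucc - x (Fin.last n)) t + (∑ i, x i) / (n+1)) :
    ∀ (x : Fin (n+1) → ℝ) (t : ℝ), t ∈ Set.Ioo (0:ℝ) 1 →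
      -- (a) ⟨∇u(x,t), 𝟙⟩ = 1
      (∑ i, pderiv (fun z => u z t) i x = 1) ∧
      -- (b) ∇²u(x,t) 𝟙 = 0
      (∀ i, ∑ j, pderiv2 (fun z => u z t) i j x = 0) ∧
      -- (c) ⟨∇²u q(m), q(m)⟩ = ⟨∇²h r(m), r(m)⟩
      (∀ m : Fin d → Bool,
        ∑ i, ∑ j, pderiv2 (fun z => u z t) i j x * q m i * q m j
          = ∑ i : Fin n, ∑ j : Fin n,
              pderiv2 (fun w => h w t) i j (fun i => x i.castSucc - x (Fin.last n))
                * (q m i.castSucc - q m (Fin.last n)) * (q m j.castSucc - q m (Fin.last n))) ∧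
      -- (d) u_t + (1/2^{d+1}) Σ_m ⟨∇²u q(m), q(m)⟩ = 0
      (deriv (fun τ => u x τ) t
        + (1 / 2^(d+1)) * ∑ m : Fin d → Bool,
            ∑ i, ∑ j, pderiv2 (fun z => u z t) i j x * q m i * q m j = 0) :=
  stmt15_general q h hsmooth hPDE u hu
end
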